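/- arXiv:2507.18141 — 3 statements merged into one kernel-verified Lean document; each statement's English description precedes it below -/
import Mathlib

section
/- Small-gain compositional condition: Let M ∈ ℕ⁺, and for i = 1,…,M let S_i : ℝ^{n_i} × ℝ^{n_i} → ℝ≥0, constants α̲_i > 0, γ_i ∈ (0,1), ρ_i ≥ 0 satisfy: (a) α̲_i‖x_i − x_i'‖² ≤ S_i(x_i, x_i'), and (b) S_i(f_i(x_i, w_i), f_i(x_i', w_i')) ≤ γ_i S_i(x_i, x_i') + ρ_i ‖w_i − w_i'‖² for all states and internal inputs. Consider the interconnection w_{ij} = x_j (j ≠ i). Define Γ = diag(1 − γ_1, …, 1 − γ_M) and Δ = {δ̂_{ij}} with δ̂_{ij} = ρ_i / α̲_j for i ≠ j, δ̂_{ii} = 0. If every entry ζ_i of the row vector 𝟙_M^⊤(−Γ + Δ) is negative, then for V(x, x') := Σ_i S_i(x_i, x_i') and any ζ with max_i ζ_i < ζ < 0 and ζ ∈ (−1, 0), the interconnected map f(x) = [f_1(x_1, w_1); …; f_M(x_M, w_M)] satisfies V(f(x), f(x')) ≤ (1 + ζ) V(x, x') for all x, x' ∈ ℝ^n, with 0 <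 1 + ζ < 1. -/
/-!
Summing the dissipation inequalities and reading the coupling terms column by column, the
input energy `ρ i ‖w_i - w_i'‖²` sent into subsystem `i` is redistributed onto the states it
comes from: state `j` receives `(∑_{i ≠ j} ρ i) ‖x_j - x_j'‖²`, which the lower bound
`a j ‖x_j - x_j'‖² ≤ S j` turns into `(∑_{i ≠ j} ρ i) / a j * S j`. Each `S j` then carries the
coefficient `γ j + (∑_{i ≠ j} ρ i) / a j`, the `j`-th entry of `𝟙ᵀ(-Γ + Δ)` plus one, which is
below `1 + ζ`.
-/

open Finset

theorem sum_mul_sum_erase_comm {ι R : Type*} [Fintype ι] [DecidableEq ι] [CommRing R]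
    (ρ n : ι → R) :
    ∑ i, ρ i * ∑ j ∈ univ.erase i, n j = ∑ j, (∑ i ∈ univ.erase j, ρ i) * n j := by
  simp only [sum_erase_eq_sub (mem_univ _), mul_sub, sum_sub_distrib, ← sum_mul,
    mul_comm]

theorem PiLp.norm_sq_toLp_sub_subtype {ι : Type*} [Fintype ι] {E : ι → Type*}
    [∀ i, NormedAddCommGroup (E i)] (p : ι → Prop) [DecidablePred p] (x x' : ∀ i, E i) :
    ‖WithLp.toLp 2 (fun j : {j // p j} => x j) - WithLp.toLp 2 (fun j : {j // p j} => x' j)‖ ^ 2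
      = ∑ j ∈ univ.filter p, ‖x j - x' j‖ ^ 2 := by
  rw [PiLp.norm_sq_eq_of_L2, ← sum_subtype_eq_sum_filter, subtype_univ]
  rfl

theorem sum_le_mul_sum_of_small_gain {ι : Type*} [Fintype ι] [DecidableEq ι]
    (T S n a γ ρ : ι → ℝ) (c : ℝ) (ha : ∀ i, 0 < a i) (hρ : ∀ i, 0 ≤ ρ i) (hn : ∀ i, 0 ≤ n i)
    (hlow : ∀ i, a i * n i ≤ S i)
    (hstep : ∀ i, T i ≤ γ i * S i + ρ i * ∑ j ∈ univ.erase i, n j)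
    (hgain : ∀ j, γ j + (∑ i ∈ univ.erase j, ρ i) / a j ≤ c) :
    ∑ i, T i ≤ c * ∑ i, S i := by
  have hS : ∀ i, 0 ≤ S i := fun i => (mul_nonneg (ha i).le (hn i)).trans (hlow i)
  have hcoupling : ∀ j, (∑ i ∈ univ.erase j, ρ i) * n j ≤ (∑ i ∈ univ.erase j, ρ i) / a j * S j :=
    fun j => calc
      (∑ i ∈ univ.erase j, ρ i) * n j = (∑ i ∈ univ.erase j, ρ i) / a j * (a j * n j) := by
        field_simp [(ha j).ne']
      _ ≤ _ := mul_le_mul_of_nonneg_left (hlow j)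
        (div_nonneg (sum_nonneg fun i _ => hρ i) (ha j).le)
  calc ∑ i, T i ≤ ∑ i, (γ i * S i + ρ i * ∑ j ∈ univ.erase i, n j) := sum_le_sum fun i _ => hstep i
    _ = ∑ j, γ j * S j + ∑ j, (∑ i ∈ univ.erase j, ρ i) * n j := by
      rw [sum_add_distrib, sum_mul_sum_erase_comm]
    _ ≤ ∑ j, γ j * S j + ∑ j, (∑ i ∈ univ.erase j, ρ i) / a j * S j :=
      add_le_add_right (sum_le_sum fun j _ => hcoupling j) _
    _ = ∑ j, (γ j + (∑ i ∈ univ.erase j, ρ i) / a j) * S j := by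
      simp only [← sum_add_distrib, add_mul]
    _ ≤ ∑ j, c * S j := by gcongr with j; exacts [hS j, hgain j]
    _ = c * ∑ j, S j := (mul_sum ..).symm

theorem small_gain_composition_general {M : ℕ} (E : Fin M → Type*)
    [∀ i, NormedAddCommGroup (E i)]
    (f : ∀ i, E i → PiLp 2 (fun j : {j : Fin M // j ≠ i} => E j.1) → E i)
    (S : ∀ i, E i → E i → ℝ) (a γ ρ : Fin M → ℝ)
    (ha : ∀ i, 0 < a i) (hρ : ∀ i, 0 ≤ ρ i)
    (hlow : ∀ i (x x' : E i), a i * ‖x - x'‖^2 ≤ S i x x')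
    (hdiss : ∀ i (x x' : E i) (w w' : PiLp 2 (fun j : {j : Fin M // j ≠ i} => E j.1)),
      S i (f i x w) (f i x' w') ≤ γ i * S i x x' + ρ i * ‖w - w'‖^2)
    (ζ : ℝ) (hζmax : ∀ j, γ j - 1 + (∑ i ∈ Finset.univ.erase j, ρ i) / a j < ζ)
    (hζ0 : ζ < 0) (hζ1 : -1 < ζ) :
    (∀ x x' : ∀ i, E i,
      (∑ i, S i (f i (x i) (WithLp.toLp 2 (fun j : {j : Fin M // j ≠ i} => x j.1))) (f i (x' i) (WithLp.toLp 2 (fun j : {j : Fin M // j ≠ i} => x' j.1))))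
        ≤ (1 + ζ) * ∑ i, S i (x i) (x' i)) ∧ 0 < 1 + ζ ∧ 1 + ζ < 1 := by
  refine ⟨fun x x' => ?_, by linarith, by linarith⟩
  refine sum_le_mul_sum_of_small_gain _ _ (fun j => ‖x j - x' j‖ ^ 2) a γ ρ _ ha hρ
    (fun j => by positivity) (fun j => hlow j _ _) (fun i => ?_) (fun j => by linarith [hζmax j])
  rw [← filter_ne', ← PiLp.norm_sq_toLp_sub_subtype]
  exact hdiss i _ _ _ _

/-- Small-gain compositional condition: if every entry of 𝟙ᵀ(−Γ+Δ) is negative, then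
V = Σ S_i decreases by factor 1+ζ along the interconnected dynamics, for any ζ with
max_i ζ_i < ζ < 0, ζ ∈ (−1,0). -/
theorem small_gain_composition {M : ℕ} [NeZero M] (E : Fin M → Type*)
    [∀ i, NormedAddCommGroup (E i)]
    (f : ∀ i, E i → PiLp 2 (fun j : {j : Fin M // j ≠ i} => E j.1) → E i)
    (S : ∀ i, E i → E i → ℝ) (a γ ρ : Fin M → ℝ)
    (ha : ∀ i, 0 < a i) (hγ : ∀ i, γ i ∈ Set.Ioo (0:ℝ) 1) (hρ : ∀ i, 0 ≤ ρ i)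
    (hlow : ∀ i (x x' : E i), a i * ‖x - x'‖^2 ≤ S i x x')
    (hdiss : ∀ i (x x' : E i) (w w' : PiLp 2 (fun j : {j : Fin M // j ≠ i} => E j.1)),
      S i (f i x w) (f i x' w') ≤ γ i * S i x x' + ρ i * ‖w - w'‖^2)
    (hneg : ∀ j, γ j - 1 + (∑ i ∈ Finset.univ.erase j, ρ i) / a j < 0)
    (ζ : ℝ) (hζmax : ∀ j, γ j - 1 + (∑ i ∈ Finset.univ.erase j, ρ i) / a j < ζ)
    (hζ0 : ζ < 0) (hζ1 : -1 < ζ) :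
    (∀ x x' : ∀ i, E i,
      (∑ i, S i (f i (x i) (WithLp.toLp 2 (fun j : {j : Fin M // j ≠ i} => x j.1))) (f i (x' i) (WithLp.toLp 2 (fun j : {j : Fin M // j ≠ i} => x' j.1))))
        ≤ (1 + ζ) * ∑ i, S i (x i) (x' i)) ∧ 0 < 1 + ζ ∧ 1 + ζ < 1 :=
  small_gain_composition_general E f S a γ ρ ha hρ hlow hdiss ζ hζmax hζ0 hζ1
end

section
/- Suppose each subsystem i ∈ {1,…,M} satisfies, for all states x_i, x_i' and internal inputs w_i, w_i': S_i(f_i(x_i, w_i), f_i(x_i', w_i')) ≤ γ_i S_i(x_i, x_i') + ρ_i ‖w_i − w_i'‖², with α̲_j‖x_j − x_j'‖² ≤ S_j(x_j, x_j') for all j. Under the ring interconnection w_i = x_{i−1} (indices mod M, i.e., w_1 = x_M), the composite function V(x, x') = Σ_i S_i(x_i, x_i') satisfies V(f(x), f(x')) ≤ Σ_i (γ_i S_i(x_i, x_i') + (ρ_{σ(i)}/α̲_i) S_i(x_i, x_i')), where σ(i) = i+1 mod M; in particular if γ_i + ρ_{σ(i)}/α̲_i ≤ 1 + ζ for all i with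 −1 < ζ < 0, then V(f(x), f(x')) ≤ (1 + ζ) V(x, x'). -/
open Finset

theorem Fintype.sum_apply_sub_eq_sum_add_apply {G R : Type*} [AddGroup G] [Fintype G]
    [AddCommMonoid R] (F : G → G → R) (c : G) :
    ∑ i, F i (i - c) = ∑ i, F (i + c) i :=
  Fintype.sum_equiv (Equiv.subRight c) _ _ fun i => by
    rw [Equiv.subRight_apply, sub_add_cancel]

theorem mul_le_div_mul_of_mul_le {a b c r : ℝ} (ha : 0 < a) (hr : 0 ≤ r) (h : a * b ≤ c) :
    r * b ≤ r / a * c := by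
  rw [div_mul_eq_mul_div, le_div_iff₀ ha]
  nlinarith [mul_le_mul_of_nonneg_left h hr]

theorem ring_interconnection_decrease_general {M : ℕ} [NeZero M] (E : Fin M → Type*)
    [∀ i, NormedAddCommGroup (E i)]
    (f : ∀ i : Fin M, E i → E (i - 1) → E i)
    (S : ∀ i, E i → E i → ℝ) (a γ ρ : Fin M → ℝ)
    (ha : ∀ i, 0 < a i) (hρ : ∀ i, 0 ≤ ρ i)
    (hdiss : ∀ i (x x' : E i) (w w' : E (i - 1)),
      S i (f i x w) (f i x' w') ≤ γ i * S i x x' + ρ i * ‖w - w'‖^2)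
    (hlow : ∀ j (x x' : E j), a j * ‖x - x'‖^2 ≤ S j x x')
    (x x' : ∀ i, E i) :
    ((∑ i, S i (f i (x i) (x (i - 1))) (f i (x' i) (x' (i - 1))))
        ≤ ∑ i, (γ i * S i (x i) (x' i) + (ρ (i + 1) / a i) * S i (x i) (x' i))) ∧
    (∀ ζ : ℝ, -1 < ζ → ζ < 0 → (∀ i, γ i + ρ (i + 1) / a i ≤ 1 + ζ) →
      (∑ i, S i (f i (x i) (x (i - 1))) (f i (x' i) (x' (i - 1))))
        ≤ (1 + ζ) * ∑ i, S i (x i) (x' i)) := by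
  -- The coupling term of subsystem `i` is charged to its predecessor `i - 1`.
  have hV : ∑ i, S i (f i (x i) (x (i - 1))) (f i (x' i) (x' (i - 1)))
      ≤ ∑ i, (γ i * S i (x i) (x' i) + ρ (i + 1) / a i * S i (x i) (x' i)) :=
    calc _ ≤ ∑ i, (γ i * S i (x i) (x' i) + ρ i * ‖x (i - 1) - x' (i - 1)‖ ^ 2) :=
          sum_le_sum fun i _ => hdiss i _ _ _ _
      _ = ∑ i, γ i * S i (x i) (x' i) + ∑ i, ρ (i + 1) * ‖x i - x' i‖ ^ 2 := by
          rw [sum_add_distrib, Fintype.sum_apply_sub_eq_sum_add_apply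
            (fun i j => ρ i * ‖x j - x' j‖ ^ 2)]
      _ ≤ _ := by
          rw [sum_add_distrib]
          exact add_le_add le_rfl <| sum_le_sum fun i _ =>
            mul_le_div_mul_of_mul_le (ha i) (hρ _) (hlow i _ _)
  refine ⟨hV, fun ζ _ _ hζ => hV.trans ?_⟩
  rw [mul_sum]
  refine sum_le_sum fun i _ => ?_
  have hS : 0 ≤ S i (x i) (x' i) := (mul_nonneg (ha i).le (sq_nonneg _)).trans (hlow i _ _)
  rw [← add_mul]
  exact mul_le_mul_of_nonneg_right (hζ i) hS

/-- Ring interconnection: the composite V = Σ S_i satisfies the small-gain decrease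
estimate under the ring topology w_i = x_{i−1}. -/
theorem ring_interconnection_decrease {M : ℕ} [NeZero M] (E : Fin M → Type*)
    [∀ i, NormedAddCommGroup (E i)]
    (f : ∀ i : Fin M, E i → E (i - 1) → E i)
    (S : ∀ i, E i → E i → ℝ) (a γ ρ : Fin M → ℝ)
    (ha : ∀ i, 0 < a i) (hγ : ∀ i, γ i ∈ Set.Ioo (0:ℝ) 1) (hρ : ∀ i, 0 ≤ ρ i)
    (hSnn : ∀ i x x', 0 ≤ S i x x')
    (hdiss : ∀ i (x x' : E i) (w w' : E (i - 1)),
      S i (f i x w) (f i x' w') ≤ γ i * S i x x' + ρ i * ‖w - w'‖^2)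
    (hlow : ∀ j (x x' : E j), a j * ‖x - x'‖^2 ≤ S j x x')
    (x x' : ∀ i, E i) :
    ((∑ i, S i (f i (x i) (x (i - 1))) (f i (x' i) (x' (i - 1))))
        ≤ ∑ i, (γ i * S i (x i) (x' i) + (ρ (i + 1) / a i) * S i (x i) (x' i))) ∧
    (∀ ζ : ℝ, -1 < ζ → ζ < 0 → (∀ i, γ i + ρ (i + 1) / a i ≤ 1 + ζ) →
      (∑ i, S i (f i (x i) (x (i - 1))) (f i (x' i) (x' (i - 1))))
        ≤ (1 + ζ) * ∑ i, S i (x i) (x' i)) :=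
  ring_interconnection_decrease_general E f S a γ ρ ha hρ hdiss hlow x x'
end

section
/- Consider the two-subsystem negative-feedback interconnection x(k+1) = A x(k) with block matrix A = [[A₁, −B₁], [B₂, A₂]]. Suppose there exist symmetric positive definite P₁, P₂, constants ϑ₁, ϑ₂ > 0 and γ̄₁, γ̄₂ ∈ (0,1) with (1+ϑ_i) A_iᵀ P_i A_i ⪯ γ̄_i P_i for i = 1, 2, and set ρ_i = (1 + 1/ϑ_i)‖√P_i B_i‖², α̲_i = λ_min(P_i). If (1 − γ̄₁) > ρ₂/α̲₁ and (1 − γ̄₂) > ρ₁/α̲₂, then V(x, x') = (x₁−x₁')ᵀP₁(x₁−x₁') + (x₂−x₂')ᵀP₂(x₂−x₂') satisfies V(Ax, Ax') ≤ (1+ζ)V(x, x') for some ζ ∈ (−1, 0) and the interconnected linear system is δ-GAS. -/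
/-!
Each subsystem contracts its own quadratic form: by Young's inequality and the LMI,
`‖A₁u - B₁v‖²_{P₁} ≤ γ̄₁ ‖u‖²_{P₁} + (1 + 1/ϑ₁) ‖√P₁ B₁ v‖² ≤ γ̄₁ ‖u‖²_{P₁} + (ρ₁/α̲₂) ‖v‖²_{P₂}`,
and symmetrically for the second subsystem. Adding the two, the cross gains are absorbed by the
small-gain conditions, so `V` contracts by `μ = max (γ̄₁ + ρ₂/α̲₁) (γ̄₂ + ρ₁/α̲₂) < 1`. Since `V` is
comparable to the squared Euclidean distance, `√μ` is an exponential rate of incremental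
convergence.
-/

open Matrix

lemma EuclideanSpace.norm_toLp_sq_eq_dotProduct {n : Type*} [Fintype n] (v : n → ℝ) :
    ‖WithLp.toLp 2 v‖ ^ 2 = v ⬝ᵥ v := by
  rw [EuclideanSpace.norm_sq_eq]
  simp [dotProduct, sq]

namespace Matrix

variable {m n : Type*} [Fintype m] [Fintype n]

lemma dotProduct_transpose_mul_mul_mulVec (M : Matrix m n ℝ) (P : Matrix m m ℝ) (v : n → ℝ) :
    v ⬝ᵥ (Mᵀ * P * M) *ᵥ v = (M *ᵥ v) ⬝ᵥ P *ᵥ (M *ᵥ v) := by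
  rw [← mulVec_mulVec, ← mulVec_mulVec, dotProduct_mulVec v, vecMul_transpose]

lemma dotProduct_transpose_mul_mulVec (M : Matrix m n ℝ) (v : n → ℝ) :
    v ⬝ᵥ (Mᵀ * M) *ᵥ v = (M *ᵥ v) ⬝ᵥ (M *ᵥ v) := by
  rw [← mulVec_mulVec, dotProduct_mulVec v, vecMul_transpose]

lemma IsHermitian.dotProduct_mulVec_comm {P : Matrix n n ℝ} (hP : P.IsHermitian) (u v : n → ℝ) :
    u ⬝ᵥ P *ᵥ v = v ⬝ᵥ P *ᵥ u := by
  rw [dotProduct_mulVec, ← vecMul_transpose, ← conjTranspose_eq_transpose_of_trivial, hP,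
    dotProduct_comm]

lemma PosSemidef.dotProduct_mulVec_self_nonneg {P : Matrix n n ℝ} (hP : P.PosSemidef)
    (x : n → ℝ) : 0 ≤ x ⬝ᵥ P *ᵥ x := by
  simpa using hP.dotProduct_mulVec_nonneg x

lemma PosSemidef.dotProduct_mulVec_add_le {P : Matrix n n ℝ} (hP : P.PosSemidef) {ϑ : ℝ}
    (hϑ : 0 < ϑ) (u v : n → ℝ) :
    (u + v) ⬝ᵥ P *ᵥ (u + v) ≤ (1 + ϑ) * (u ⬝ᵥ P *ᵥ u) + (1 + 1 / ϑ) * (v ⬝ᵥ P *ᵥ v) := by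
  have hsymm := hP.1.dotProduct_mulVec_comm v u
  have key : ϑ * ((1 + ϑ) * (u ⬝ᵥ P *ᵥ u) + (1 + 1 / ϑ) * (v ⬝ᵥ P *ᵥ v)
      - (u + v) ⬝ᵥ P *ᵥ (u + v)) = (ϑ • u - v) ⬝ᵥ P *ᵥ (ϑ • u - v) := by
    simp only [mulVec_add, mulVec_sub, mulVec_smul, add_dotProduct, dotProduct_add,
      sub_dotProduct, dotProduct_sub, smul_dotProduct, dotProduct_smul, smul_eq_mul, hsymm]
    field_simp
    ring
  have := (mul_nonneg_iff_of_pos_left hϑ).1 (key ▸ hP.dotProduct_mulVec_self_nonneg _)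
  linarith

lemma PosSemidef.dotProduct_mulVec_mulVec_add_le {A P : Matrix n n ℝ} (hP : P.PosSemidef)
    {γ ϑ : ℝ} (hϑ : 0 < ϑ) (hLMI : (γ • P - (1 + ϑ) • (Aᵀ * P * A)).PosSemidef) (u w : n → ℝ) :
    (A *ᵥ u + w) ⬝ᵥ P *ᵥ (A *ᵥ u + w) ≤ γ * (u ⬝ᵥ P *ᵥ u) + (1 + 1 / ϑ) * (w ⬝ᵥ P *ᵥ w) := by
  have hA := hLMI.dotProduct_mulVec_self_nonneg u
  rw [sub_mulVec, dotProduct_sub, sub_nonneg, smul_mulVec, smul_mulVec, dotProduct_smul,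
    dotProduct_smul, smul_eq_mul, smul_eq_mul, dotProduct_transpose_mul_mul_mulVec] at hA
  linarith [hP.dotProduct_mulVec_add_le hϑ (A *ᵥ u) w]

variable [DecidableEq n]

lemma dotProduct_mulVec_self_le (M : Matrix m n ℝ) (v : n → ℝ) :
    (M *ᵥ v) ⬝ᵥ (M *ᵥ v) ≤ ‖LinearMap.toContinuousLinearMap (toEuclideanLin M)‖ ^ 2 * (v ⬝ᵥ v) := by
  rw [← EuclideanSpace.norm_toLp_sq_eq_dotProduct, ← EuclideanSpace.norm_toLp_sq_eq_dotProduct,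
    ← mul_pow]
  exact pow_le_pow_left₀ (norm_nonneg _)
    ((LinearMap.toContinuousLinearMap (toEuclideanLin M)).le_opNorm (WithLp.toLp 2 v)) 2

open scoped MatrixOrder in
lemma IsHermitian.mul_dotProduct_self_le {P : Matrix n n ℝ} (hP : P.IsHermitian) {c : ℝ}
    (hc : ∀ i, c ≤ hP.eigenvalues i) (x : n → ℝ) : c * (x ⬝ᵥ x) ≤ x ⬝ᵥ P *ᵥ x := by
  have hcP : algebraMap ℝ (Matrix n n ℝ) c ≤ P := by
    rw [algebraMap_le_iff_le_spectrum hP.isSelfAdjoint, hP.spectrum_real_eq_range_eigenvalues]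
    rintro _ ⟨i, rfl⟩
    exact hc i
  have := (le_iff.1 hcP).dotProduct_mulVec_self_nonneg x
  rwa [Algebra.algebraMap_eq_smul_one, sub_mulVec, dotProduct_sub, smul_mulVec, one_mulVec,
    dotProduct_smul, smul_eq_mul, sub_nonneg] at this

open scoped MatrixOrder in
lemma IsHermitian.dotProduct_mulVec_le_mul {P : Matrix n n ℝ} (hP : P.IsHermitian) {c : ℝ}
    (hc : ∀ i, hP.eigenvalues i ≤ c) (x : n → ℝ) : x ⬝ᵥ P *ᵥ x ≤ c * (x ⬝ᵥ x) := by
  have hPc : P ≤ algebraMap ℝ (Matrix n n ℝ) c := by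
    rw [le_algebraMap_iff_spectrum_le hP.isSelfAdjoint, hP.spectrum_real_eq_range_eigenvalues]
    rintro _ ⟨i, rfl⟩
    exact hc i
  have := (le_iff.1 hPc).dotProduct_mulVec_self_nonneg x
  rwa [Algebra.algebraMap_eq_smul_one, sub_mulVec, dotProduct_sub, smul_mulVec, one_mulVec,
    dotProduct_smul, smul_eq_mul, sub_nonneg] at this

lemma IsHermitian.eigenvectorUnitary_mul_diagonal_sqrt_eq_cfc {P : Matrix n n ℝ}
    (hP : P.IsHermitian) :
    (hP.eigenvectorUnitary : Matrix n n ℝ) *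
      diagonal ((RCLike.ofReal : ℝ → ℝ) ∘ Real.sqrt ∘ hP.eigenvalues) *
      (star hP.eigenvectorUnitary : Matrix n n ℝ) = cfc Real.sqrt P := by
  rw [hP.cfc_eq, IsHermitian.cfc, Unitary.conjStarAlgAut_apply]

lemma PosSemidef.transpose_cfc_sqrt_mul_self {P : Matrix n n ℝ} (hP : P.PosSemidef) :
    (cfc Real.sqrt P)ᵀ * cfc Real.sqrt P = P := by
  have hsa : IsSelfAdjoint (cfc Real.sqrt P) := cfc_predicate _ _
  rw [← conjTranspose_eq_transpose_of_trivial, ← star_eq_conjTranspose, hsa.star_eq,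
    ← cfc_mul Real.sqrt Real.sqrt P]
  conv_rhs => rw [← cfc_id' ℝ P hP.1.isSelfAdjoint]
  refine cfc_congr fun x hx => ?_
  rw [hP.1.spectrum_real_eq_range_eigenvalues] at hx
  obtain ⟨i, rfl⟩ := hx
  exact Real.mul_self_sqrt (hP.eigenvalues_nonneg i)

lemma dotProduct_mulVec_mulVec_le_of_transpose_mul_self {S P : Matrix m m ℝ} (hS : Sᵀ * S = P)
    (B : Matrix m n ℝ) (v : n → ℝ) :
    (B *ᵥ v) ⬝ᵥ P *ᵥ (B *ᵥ v) ≤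
      ‖LinearMap.toContinuousLinearMap (toEuclideanLin (S * B))‖ ^ 2 * (v ⬝ᵥ v) := by
  have hSB : Bᵀ * P * B = (S * B)ᵀ * (S * B) := by
    simp only [← hS, transpose_mul, Matrix.mul_assoc]
  rw [← dotProduct_transpose_mul_mul_mulVec, hSB, dotProduct_transpose_mul_mulVec]
  exact dotProduct_mulVec_self_le _ _

lemma mul_dotProduct_mulVec_mulVec_le_of_le_eigenvalues {S P : Matrix m m ℝ} (hS : Sᵀ * S = P)
    (B : Matrix m n ℝ) {Q : Matrix n n ℝ} (hQ : Q.IsHermitian) {a κ : ℝ} (ha : 0 < a)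
    (haQ : ∀ i, a ≤ hQ.eigenvalues i) (hκ : 0 ≤ κ) (v : n → ℝ) :
    κ * ((B *ᵥ v) ⬝ᵥ P *ᵥ (B *ᵥ v)) ≤
      κ * ‖LinearMap.toContinuousLinearMap (toEuclideanLin (S * B))‖ ^ 2 / a * (v ⬝ᵥ Q *ᵥ v) := by
  set g := ‖LinearMap.toContinuousLinearMap (toEuclideanLin (S * B))‖
  calc κ * ((B *ᵥ v) ⬝ᵥ P *ᵥ (B *ᵥ v)) ≤ κ * (g ^ 2 * (v ⬝ᵥ v)) :=
        mul_le_mul_of_nonneg_left (dotProduct_mulVec_mulVec_le_of_transpose_mul_self hS B v) hκ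
    _ = κ * g ^ 2 / a * (a * (v ⬝ᵥ v)) := by field_simp
    _ ≤ κ * g ^ 2 / a * (v ⬝ᵥ Q *ᵥ v) :=
        mul_le_mul_of_nonneg_left (hQ.mul_dotProduct_self_le haQ v) (by positivity)

end Matrix

section BlockQuadForm

variable {m n : Type*} [Fintype m] [Fintype n]

def blockQuadForm (P₁ : Matrix m m ℝ) (P₂ : Matrix n n ℝ) (z : m ⊕ n → ℝ) : ℝ :=
  (z ∘ Sum.inl) ⬝ᵥ P₁ *ᵥ (z ∘ Sum.inl) + (z ∘ Sum.inr) ⬝ᵥ P₂ *ᵥ (z ∘ Sum.inr)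

lemma dotProduct_self_eq_inl_add_inr (z : m ⊕ n → ℝ) :
    z ⬝ᵥ z = (z ∘ Sum.inl) ⬝ᵥ (z ∘ Sum.inl) + (z ∘ Sum.inr) ⬝ᵥ (z ∘ Sum.inr) := by
  simp [dotProduct, Fintype.sum_sum_type]

lemma blockQuadForm_fromBlocks_mulVec_le {A₁ P₁ : Matrix m m ℝ} {A₂ P₂ : Matrix n n ℝ}
    {B₁ : Matrix m n ℝ} {B₂ : Matrix n m ℝ} (hP₁ : P₁.PosSemidef) (hP₂ : P₂.PosSemidef)
    {ϑ₁ ϑ₂ γ₁ γ₂ c₁ c₂ : ℝ} (hϑ₁ : 0 < ϑ₁) (hϑ₂ : 0 < ϑ₂)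
    (hLMI₁ : (γ₁ • P₁ - (1 + ϑ₁) • (A₁ᵀ * P₁ * A₁)).PosSemidef)
    (hLMI₂ : (γ₂ • P₂ - (1 + ϑ₂) • (A₂ᵀ * P₂ * A₂)).PosSemidef)
    (hB₁ : ∀ v, (1 + 1 / ϑ₁) * ((B₁ *ᵥ v) ⬝ᵥ P₁ *ᵥ (B₁ *ᵥ v)) ≤ c₁ * (v ⬝ᵥ P₂ *ᵥ v))
    (hB₂ : ∀ u, (1 + 1 / ϑ₂) * ((B₂ *ᵥ u) ⬝ᵥ P₂ *ᵥ (B₂ *ᵥ u)) ≤ c₂ * (u ⬝ᵥ P₁ *ᵥ u))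
    (z : m ⊕ n → ℝ) :
    blockQuadForm P₁ P₂ (fromBlocks A₁ (-B₁) B₂ A₂ *ᵥ z) ≤
      max (γ₁ + c₂) (γ₂ + c₁) * blockQuadForm P₁ P₂ z := by
  set u := z ∘ Sum.inl
  set v := z ∘ Sum.inr
  have hneg : ((-B₁) *ᵥ v) ⬝ᵥ P₁ *ᵥ ((-B₁) *ᵥ v) = (B₁ *ᵥ v) ⬝ᵥ P₁ *ᵥ (B₁ *ᵥ v) := by
    simp only [neg_mulVec, mulVec_neg, neg_dotProduct, dotProduct_neg, neg_neg]
  have h₁ := hP₁.dotProduct_mulVec_mulVec_add_le hϑ₁ hLMI₁ u ((-B₁) *ᵥ v)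
  have h₂ := hP₂.dotProduct_mulVec_mulVec_add_le hϑ₂ hLMI₂ v (B₂ *ᵥ u)
  rw [hneg] at h₁
  have hu := mul_le_mul_of_nonneg_right (le_max_left (γ₁ + c₂) (γ₂ + c₁))
    (hP₁.dotProduct_mulVec_self_nonneg u)
  have hv := mul_le_mul_of_nonneg_right (le_max_right (γ₁ + c₂) (γ₂ + c₁))
    (hP₂.dotProduct_mulVec_self_nonneg v)
  simp only [blockQuadForm, fromBlocks_mulVec, Sum.elim_comp_inl, Sum.elim_comp_inr]
  rw [add_comm (B₂ *ᵥ u)]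
  linarith [hB₁ v, hB₂ u]

lemma exists_blockQuadForm_sandwich [Nonempty m] [Nonempty n] [DecidableEq m] [DecidableEq n]
    {P₁ : Matrix m m ℝ} {P₂ : Matrix n n ℝ} (hP₁ : P₁.PosDef) (hP₂ : P₂.PosDef) :
    ∃ a b : ℝ, 0 < a ∧ 0 < b ∧
      ∀ z, a * (z ⬝ᵥ z) ≤ blockQuadForm P₁ P₂ z ∧ blockQuadForm P₁ P₂ z ≤ b * (z ⬝ᵥ z) := by
  obtain ⟨i₀⟩ := ‹Nonempty m›
  refine ⟨min (Finset.univ.inf' Finset.univ_nonempty hP₁.1.eigenvalues)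
      (Finset.univ.inf' Finset.univ_nonempty hP₂.1.eigenvalues),
    max (Finset.univ.sup' Finset.univ_nonempty hP₁.1.eigenvalues)
      (Finset.univ.sup' Finset.univ_nonempty hP₂.1.eigenvalues), ?_, ?_, fun z => ?_⟩
  · exact lt_min ((Finset.lt_inf'_iff _).2 fun i _ => hP₁.eigenvalues_pos i)
      ((Finset.lt_inf'_iff _).2 fun i _ => hP₂.eigenvalues_pos i)
  · exact lt_max_of_lt_left
      ((hP₁.eigenvalues_pos i₀).trans_le (Finset.le_sup' _ (Finset.mem_univ i₀)))
  rw [blockQuadForm, dotProduct_self_eq_inl_add_inr, mul_add, mul_add]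
  constructor
  · gcongr
    · exact hP₁.1.mul_dotProduct_self_le
        (fun i => (min_le_left _ _).trans (Finset.inf'_le _ (Finset.mem_univ i))) _
    · exact hP₂.1.mul_dotProduct_self_le
        (fun i => (min_le_right _ _).trans (Finset.inf'_le _ (Finset.mem_univ i))) _
  · gcongr
    · exact hP₁.1.dotProduct_mulVec_le_mul
        (fun i => (Finset.le_sup' _ (Finset.mem_univ i)).trans (le_max_left _ _)) _
    · exact hP₂.1.dotProduct_mulVec_le_mul
        (fun i => (Finset.le_sup' _ (Finset.mem_univ i)).trans (le_max_right _ _)) _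

end BlockQuadForm

section ExponentialStability

variable {ι : Type*} [Fintype ι] [DecidableEq ι]

lemma apply_pow_mulVec_le {A : Matrix ι ι ℝ} {W : (ι → ℝ) → ℝ} {μ : ℝ} (hμ : 0 ≤ μ)
    (hstep : ∀ z, W (A *ᵥ z) ≤ μ * W z) (k : ℕ) (z : ι → ℝ) :
    W (A ^ k *ᵥ z) ≤ μ ^ k * W z := by
  induction k with
  | zero => simp
  | succ k ih =>
    rw [pow_succ', ← mulVec_mulVec, pow_succ', mul_assoc]
    exact (hstep _).trans (mul_le_mul_of_nonneg_left ih hμ)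

lemma exists_sqrt_sum_sq_pow_mulVec_sub_le (A : Matrix ι ι ℝ) (W : (ι → ℝ) → ℝ) {μ a b : ℝ}
    (hμ₀ : 0 < μ) (hμ₁ : μ < 1) (ha : 0 < a) (hb : 0 < b)
    (hstep : ∀ z, W (A *ᵥ z) ≤ μ * W z) (hlow : ∀ z, a * (z ⬝ᵥ z) ≤ W z)
    (hupp : ∀ z, W z ≤ b * (z ⬝ᵥ z)) :
    ∃ c q : ℝ, 0 < c ∧ 0 < q ∧ q < 1 ∧ ∀ (x x' : ι → ℝ) (k : ℕ),
      √(∑ i, ((A ^ k *ᵥ x) i - (A ^ k *ᵥ x') i) ^ 2) ≤ c * q ^ k * √(∑ i, (x i - x' i) ^ 2) := by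
  refine ⟨√(b / a), √μ, by positivity, Real.sqrt_pos.2 hμ₀,
    (Real.sqrt_lt' one_pos).2 (by rwa [one_pow]), fun x x' k => ?_⟩
  have hsum : ∀ y y' : ι → ℝ, ∑ i, (y i - y' i) ^ 2 = (y - y') ⬝ᵥ (y - y') := by
    simp [dotProduct, sq]
  rw [hsum, hsum, ← mulVec_sub]
  set z := x - x'
  have hz : a * ((A ^ k *ᵥ z) ⬝ᵥ (A ^ k *ᵥ z)) ≤ μ ^ k * (b * (z ⬝ᵥ z)) :=
    (hlow _).trans ((apply_pow_mulVec_le hμ₀.le hstep k z).trans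
      (mul_le_mul_of_nonneg_left (hupp z) (by positivity)))
  have hD : (A ^ k *ᵥ z) ⬝ᵥ (A ^ k *ᵥ z) ≤ b / a * μ ^ k * (z ⬝ᵥ z) := by
    rw [div_mul_eq_mul_div, div_mul_eq_mul_div, le_div_iff₀' ha]
    linarith
  have hμk : μ ^ k = (√μ ^ k) ^ 2 := by
    rw [← pow_mul, mul_comm, pow_mul, Real.sq_sqrt hμ₀.le]
  calc √((A ^ k *ᵥ z) ⬝ᵥ (A ^ k *ᵥ z)) ≤ √(b / a * μ ^ k * (z ⬝ᵥ z)) := Real.sqrt_le_sqrt hD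
    _ = √(b / a) * √μ ^ k * √(z ⬝ᵥ z) := by
      rw [hμk, Real.sqrt_mul (by positivity), Real.sqrt_mul (by positivity),
        Real.sqrt_sq (by positivity)]

end ExponentialStability

theorem two_subsystem_negative_feedback_general {n₁ n₂ : ℕ} [NeZero n₁] [NeZero n₂]
    (A₁ P₁ : Matrix (Fin n₁) (Fin n₁) ℝ) (A₂ P₂ : Matrix (Fin n₂) (Fin n₂) ℝ)
    (B₁ : Matrix (Fin n₁) (Fin n₂) ℝ) (B₂ : Matrix (Fin n₂) (Fin n₁) ℝ)
    (hP₁ : P₁.PosDef) (hP₂ : P₂.PosDef)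
    (ϑ₁ ϑ₂ γ₁ γ₂ : ℝ) (hϑ₁ : 0 < ϑ₁) (hϑ₂ : 0 < ϑ₂)
    (hγ₁ : γ₁ ∈ Set.Ioo (0:ℝ) 1)
    (hLMI₁ : (γ₁ • P₁ - (1+ϑ₁) • (A₁ᵀ * P₁ * A₁)).PosSemidef)
    (hLMI₂ : (γ₂ • P₂ - (1+ϑ₂) • (A₂ᵀ * P₂ * A₂)).PosSemidef)
    (ρ₁ ρ₂ a₁ a₂ : ℝ)
    (hρ₁ : ρ₁ = (1 + 1/ϑ₁) *
      ‖LinearMap.toContinuousLinearMap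
        (Matrix.toEuclideanLin (((hP₁.posSemidef.1.eigenvectorUnitary : Matrix (Fin n₁) (Fin n₁) ℝ) *
          Matrix.diagonal ((RCLike.ofReal : ℝ → ℝ) ∘ Real.sqrt ∘ hP₁.posSemidef.1.eigenvalues) *
          (star hP₁.posSemidef.1.eigenvectorUnitary : Matrix (Fin n₁) (Fin n₁) ℝ)) * B₁))‖^2)
    (hρ₂ : ρ₂ = (1 + 1/ϑ₂) *
      ‖LinearMap.toContinuousLinearMap
        (Matrix.toEuclideanLin (((hP₂.posSemidef.1.eigenvectorUnitary : Matrix (Fin n₂) (Fin n₂) ℝ) *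
          Matrix.diagonal ((RCLike.ofReal : ℝ → ℝ) ∘ Real.sqrt ∘ hP₂.posSemidef.1.eigenvalues) *
          (star hP₂.posSemidef.1.eigenvectorUnitary : Matrix (Fin n₂) (Fin n₂) ℝ)) * B₂))‖^2)
    (ha₁ : a₁ = Finset.univ.inf' Finset.univ_nonempty hP₁.1.eigenvalues)
    (ha₂ : a₂ = Finset.univ.inf' Finset.univ_nonempty hP₂.1.eigenvalues)
    (hsg₁ : ρ₂ / a₁ < 1 - γ₁) (hsg₂ : ρ₁ / a₂ < 1 - γ₂)
    (A : Matrix (Fin n₁ ⊕ Fin n₂) (Fin n₁ ⊕ Fin n₂) ℝ)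
    (hA : A = Matrix.fromBlocks A₁ (-B₁) B₂ A₂)
    (V : ((Fin n₁ ⊕ Fin n₂) → ℝ) → ((Fin n₁ ⊕ Fin n₂) → ℝ) → ℝ)
    (hV : ∀ x x', V x x' =
      ((fun i => x (Sum.inl i)) - (fun i => x' (Sum.inl i))) ⬝ᵥ
        P₁ *ᵥ ((fun i => x (Sum.inl i)) - (fun i => x' (Sum.inl i)))
      + ((fun i => x (Sum.inr i)) - (fun i => x' (Sum.inr i))) ⬝ᵥ
        P₂ *ᵥ ((fun i => x (Sum.inr i)) - (fun i => x' (Sum.inr i)))) :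
    ∃ ζ : ℝ, -1 < ζ ∧ ζ < 0 ∧
      (∀ x x' : (Fin n₁ ⊕ Fin n₂) → ℝ, V (A *ᵥ x) (A *ᵥ x') ≤ (1 + ζ) * V x x') ∧
      ∃ c q : ℝ, 0 < c ∧ 0 < q ∧ q < 1 ∧
        ∀ (x x' : (Fin n₁ ⊕ Fin n₂) → ℝ) (k : ℕ),
          Real.sqrt (∑ i, ((A ^ k *ᵥ x) i - (A ^ k *ᵥ x') i)^2)
            ≤ c * q ^ k * Real.sqrt (∑ i, (x i - x' i)^2) := by
  have hle₁ : ∀ i, a₁ ≤ hP₁.1.eigenvalues i := fun i => ha₁ ▸ Finset.inf'_le _ (Finset.mem_univ i)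
  have hle₂ : ∀ i, a₂ ≤ hP₂.1.eigenvalues i := fun i => ha₂ ▸ Finset.inf'_le _ (Finset.mem_univ i)
  have ha₁pos : 0 < a₁ := ha₁ ▸ (Finset.lt_inf'_iff _).2 fun i _ => hP₁.eigenvalues_pos i
  have ha₂pos : 0 < a₂ := ha₂ ▸ (Finset.lt_inf'_iff _).2 fun i _ => hP₂.eigenvalues_pos i
  rw [IsHermitian.eigenvectorUnitary_mul_diagonal_sqrt_eq_cfc] at hρ₁ hρ₂
  have hB₁ := hρ₁ ▸ mul_dotProduct_mulVec_mulVec_le_of_le_eigenvalues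
    hP₁.posSemidef.transpose_cfc_sqrt_mul_self B₁ hP₂.1 ha₂pos hle₂ (by positivity)
  have hB₂ := hρ₂ ▸ mul_dotProduct_mulVec_mulVec_le_of_le_eigenvalues
    hP₂.posSemidef.transpose_cfc_sqrt_mul_self B₂ hP₁.1 ha₁pos hle₁ (by positivity)
  have hρ₂nonneg : 0 ≤ ρ₂ := hρ₂ ▸ by positivity
  set μ := max (γ₁ + ρ₂ / a₁) (γ₂ + ρ₁ / a₂)
  have hμ₀ : 0 < μ := lt_max_of_lt_left (add_pos_of_pos_of_nonneg hγ₁.1 (by positivity))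
  have hμ₁ : μ < 1 := max_lt (by linarith) (by linarith)
  have hstep : ∀ z, blockQuadForm P₁ P₂ (A *ᵥ z) ≤ μ * blockQuadForm P₁ P₂ z := hA ▸
    blockQuadForm_fromBlocks_mulVec_le hP₁.posSemidef hP₂.posSemidef hϑ₁ hϑ₂ hLMI₁ hLMI₂ hB₁ hB₂
  obtain ⟨a, b, ha, hb, hab⟩ := exists_blockQuadForm_sandwich hP₁ hP₂
  refine ⟨μ - 1, by linarith, by linarith, fun x x' => ?_,
    exists_sqrt_sum_sq_pow_mulVec_sub_le A _ hμ₀ hμ₁ ha hb hstep (hab · |>.1) (hab · |>.2)⟩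
  rw [hV, hV, add_sub_cancel]
  change blockQuadForm P₁ P₂ (A *ᵥ x - A *ᵥ x') ≤ μ * blockQuadForm P₁ P₂ (x - x')
  rw [← mulVec_sub]
  exact hstep _

/-- Two-subsystem negative-feedback interconnection: under the subsystem LMIs and the
small-gain conditions, the composite quadratic function decreases by a factor 1+ζ with
ζ ∈ (−1,0), and the interconnected linear system is δ-GAS (exponential incremental
convergence). -/
theorem two_subsystem_negative_feedback {n₁ n₂ : ℕ} [NeZero n₁] [NeZero n₂]
    (A₁ P₁ : Matrix (Fin n₁) (Fin n₁) ℝ) (A₂ P₂ : Matrix (Fin n₂) (Fin n₂) ℝ)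
    (B₁ : Matrix (Fin n₁) (Fin n₂) ℝ) (B₂ : Matrix (Fin n₂) (Fin n₁) ℝ)
    (hP₁ : P₁.PosDef) (hP₂ : P₂.PosDef)
    (ϑ₁ ϑ₂ γ₁ γ₂ : ℝ) (hϑ₁ : 0 < ϑ₁) (hϑ₂ : 0 < ϑ₂)
    (hγ₁ : γ₁ ∈ Set.Ioo (0:ℝ) 1) (hγ₂ : γ₂ ∈ Set.Ioo (0:ℝ) 1)
    (hLMI₁ : (γ₁ • P₁ - (1+ϑ₁) • (A₁ᵀ * P₁ * A₁)).PosSemidef)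
    (hLMI₂ : (γ₂ • P₂ - (1+ϑ₂) • (A₂ᵀ * P₂ * A₂)).PosSemidef)
    (ρ₁ ρ₂ a₁ a₂ : ℝ)
    (hρ₁ : ρ₁ = (1 + 1/ϑ₁) *
      ‖LinearMap.toContinuousLinearMap
        (Matrix.toEuclideanLin (((hP₁.posSemidef.1.eigenvectorUnitary : Matrix (Fin n₁) (Fin n₁) ℝ) *
          Matrix.diagonal ((RCLike.ofReal : ℝ → ℝ) ∘ Real.sqrt ∘ hP₁.posSemidef.1.eigenvalues) *
          (star hP₁.posSemidef.1.eigenvectorUnitary : Matrix (Fin n₁) (Fin n₁) ℝ)) * B₁))‖^2)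
    (hρ₂ : ρ₂ = (1 + 1/ϑ₂) *
      ‖LinearMap.toContinuousLinearMap
        (Matrix.toEuclideanLin (((hP₂.posSemidef.1.eigenvectorUnitary : Matrix (Fin n₂) (Fin n₂) ℝ) *
          Matrix.diagonal ((RCLike.ofReal : ℝ → ℝ) ∘ Real.sqrt ∘ hP₂.posSemidef.1.eigenvalues) *
          (star hP₂.posSemidef.1.eigenvectorUnitary : Matrix (Fin n₂) (Fin n₂) ℝ)) * B₂))‖^2)
    (ha₁ : a₁ = Finset.univ.inf' Finset.univ_nonempty hP₁.1.eigenvalues)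
    (ha₂ : a₂ = Finset.univ.inf' Finset.univ_nonempty hP₂.1.eigenvalues)
    (hsg₁ : ρ₂ / a₁ < 1 - γ₁) (hsg₂ : ρ₁ / a₂ < 1 - γ₂)
    (A : Matrix (Fin n₁ ⊕ Fin n₂) (Fin n₁ ⊕ Fin n₂) ℝ)
    (hA : A = Matrix.fromBlocks A₁ (-B₁) B₂ A₂)
    (V : ((Fin n₁ ⊕ Fin n₂) → ℝ) → ((Fin n₁ ⊕ Fin n₂) → ℝ) → ℝ)
    (hV : ∀ x x', V x x' =
      ((fun i => x (Sum.inl i)) - (fun i => x' (Sum.inl i))) ⬝ᵥ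
        P₁ *ᵥ ((fun i => x (Sum.inl i)) - (fun i => x' (Sum.inl i)))
      + ((fun i => x (Sum.inr i)) - (fun i => x' (Sum.inr i))) ⬝ᵥ
        P₂ *ᵥ ((fun i => x (Sum.inr i)) - (fun i => x' (Sum.inr i)))) :
    ∃ ζ : ℝ, -1 < ζ ∧ ζ < 0 ∧
      (∀ x x' : (Fin n₁ ⊕ Fin n₂) → ℝ, V (A *ᵥ x) (A *ᵥ x') ≤ (1 + ζ) * V x x') ∧
      ∃ c q : ℝ, 0 < c ∧ 0 < q ∧ q < 1 ∧
        ∀ (x x' : (Fin n₁ ⊕ Fin n₂) → ℝ) (k : ℕ),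
          Real.sqrt (∑ i, ((A ^ k *ᵥ x) i - (A ^ k *ᵥ x') i)^2)
            ≤ c * q ^ k * Real.sqrt (∑ i, (x i - x' i)^2) :=
  two_subsystem_negative_feedback_general A₁ P₁ A₂ P₂ B₁ B₂ hP₁ hP₂ ϑ₁ ϑ₂ γ₁ γ₂ hϑ₁ hϑ₂ hγ₁ hLMI₁
    hLMI₂ ρ₁ ρ₂ a₁ a₂ hρ₁ hρ₂ ha₁ ha₂ hsg₁ hsg₂ A hA V hV
end
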